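/- arXiv:1701.06614 — 3 statements merged into one kernel-verified Lean document; each statement's English description precedes it below -/
import Mathlib

section
/- For coprime integers a, q with q > 0, the number of pairs (m, n) with 0 < m, n < q, a·m ≡ n (mod q), and m·n < q equals the number of pairs (c, d) ∈ ℤ² with d > 0 and 0 < a/q − c/d < 1/d². -/
/-!
Clearing denominators, `0 < a/q - c/d < 1/d²` with `d > 0` says exactly that `n := a d - c q`
satisfies `0 < n` and `d n < q`. So the injective linear map `(c, d) ↦ (d, a d - c q)` carries the
pairs `(c, d)` onto the pairs `(m, n)` counted by `S a q`: the congruence `a m ≡ n (mod q)` is what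
lets one recover `c = (a m - n) / q`, and `m, n < q` follow from `0 < m, n` and `m n < q`.
-/

/-- `S a q` counts pairs `(m, n)` with `0 < m, n < q`, `a*m ≡ n (mod q)` and `m*n < q`. -/
noncomputable def S (a q : ℤ) : ℕ :=
  ((Finset.Ioo 0 q ×ˢ Finset.Ioo 0 q).filter
    (fun p => a * p.1 % q = p.2 % q ∧ p.1 * p.2 < q)).card

lemma S_eq_ncard (a q : ℤ) :
    S a q = Set.ncard {p : ℤ × ℤ | 0 < p.1 ∧ 0 < p.2 ∧ a * p.1 ≡ p.2 [ZMOD q] ∧ p.1 * p.2 < q} := by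
  rw [S, ← Set.ncard_coe_finset]
  congr 1
  ext ⟨m, n⟩
  simp only [Finset.coe_filter, Finset.mem_product, Finset.mem_Ioo, Set.mem_ofPred_eq, Int.ModEq]
  constructor
  · rintro ⟨⟨⟨hm, -⟩, hn, -⟩, hmod, hmn⟩
    exact ⟨hm, hn, hmod, hmn⟩
  · rintro ⟨hm, hn, hmod, hmn⟩
    exact ⟨⟨⟨hm, by nlinarith⟩, hn, by nlinarith⟩, hmod, hmn⟩

lemma div_sub_div_pos_and_lt_one_div_sq_iff {a q c d : ℤ} (hq : 0 < q) (hd : 0 < d) :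
    (0 < (a : ℚ) / q - c / d ∧ (a : ℚ) / q - c / d < 1 / (d : ℚ) ^ 2) ↔
      0 < a * d - c * q ∧ d * (a * d - c * q) < q := by
  have hq' : (0 : ℚ) < q := by exact_mod_cast hq
  have hd' : (0 : ℚ) < d := by exact_mod_cast hd
  have hsub : (a : ℚ) / q - c / d = ((a * d - c * q : ℤ) : ℚ) / (q * d) := by
    push_cast
    field_simp
  rw [hsub, div_pos_iff_of_pos_right (by positivity),
    div_lt_div_iff₀ (by positivity) (by positivity), Int.cast_pos, one_mul,
    show ((a * d - c * q : ℤ) : ℚ) * d ^ 2 = ((d * (a * d - c * q) : ℤ) : ℚ) * d by push_cast; ring,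
    mul_lt_mul_iff_left₀ hd', Int.cast_lt]

lemma injective_snd_mul_sub_fst_mul (a : ℤ) {q : ℤ} (hq : q ≠ 0) :
    Function.Injective fun p : ℤ × ℤ => (p.2, a * p.2 - p.1 * q) := by
  rintro ⟨c, d⟩ ⟨c', d'⟩ h
  simp only [Prod.mk.injEq] at h
  obtain ⟨rfl, h⟩ := h
  rw [mul_right_cancel₀ hq (by linarith : c * q = c' * q)]

theorem stmt_0_general (a q : ℤ) (hq : 0 < q) :
    (S a q : ℕ) =
      Set.ncard {p : ℤ × ℤ | 0 < p.2 ∧ 0 < (a : ℚ) / q - (p.1 : ℚ) / p.2 ∧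
        (a : ℚ) / q - (p.1 : ℚ) / p.2 < 1 / (p.2 : ℚ) ^ 2} := by
  rw [S_eq_ncard, eq_comm,
    ← Set.ncard_image_of_injective _ (injective_snd_mul_sub_fst_mul a hq.ne')]
  congr 1
  ext ⟨m, n⟩
  simp only [Set.mem_image, Set.mem_ofPred_eq, Prod.exists, Prod.mk.injEq]
  constructor
  · rintro ⟨c, d, ⟨hd, hcd⟩, rfl, rfl⟩
    obtain ⟨hn, hdn⟩ := (div_sub_div_pos_and_lt_one_div_sq_iff hq hd).mp hcd
    exact ⟨hd, hn, (Int.modEq_iff_dvd.mpr ⟨c, by ring⟩).symm, hdn⟩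
  · rintro ⟨hm, hn, hmod, hmn⟩
    obtain ⟨c, hc⟩ := Int.modEq_iff_dvd.mp hmod.symm
    have hn_eq : a * m - c * q = n := by linarith
    refine ⟨c, m, ⟨hm, (div_sub_div_pos_and_lt_one_div_sq_iff hq hm).mpr ?_⟩, rfl, hn_eq⟩
    rw [hn_eq]
    exact ⟨hn, hmn⟩

theorem stmt_0 (a q : ℤ) (hq : 0 < q) (hco : Int.gcd a q = 1) :
    (S a q : ℕ) =
      Set.ncard {p : ℤ × ℤ | 0 < p.2 ∧ 0 < (a : ℚ) / q - (p.1 : ℚ) / p.2 ∧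
        (a : ℚ) / q - (p.1 : ℚ) / p.2 < 1 / (p.2 : ℚ) ^ 2} :=
  stmt_0_general a q hq
end

section
/- Let a/q be a rational with continued fraction expansion [b₀; b₁, …, b_k] and convergents h_j/k_j for −1 ≤ j ≤ k. Every reduced fraction c/d with d > 0 satisfying 0 ≠ |a/q − c/d| < 1/d² is either a convergent h_j/k_j (−1 ≤ j ≤ k−1) or a semiconvergent (h_j + g·h_{j+1})/(k_j + g·k_{j+1}) with g = 1 or g = b_{j+2} − 1 (−1 ≤ j ≤ k−2). Moreover, in both cases c/d < a/q if and only if j is even. -/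
/-!
Write `x = P / Q` as its last convergent and pick `m` with `k_{m+1} ≤ d < k_{m+2}`. Consecutive
convergents form a unimodular matrix, so `(c, d) = u (h_{m+2}, k_{m+2}) + v (h_{m+1}, k_{m+1})`
with integers `u, v`, and then `P d - c Q = ±(v A - u B)`, where `A > 0`, `B ≥ 0` are the scaled
errors of the two convergents and `k_{m+2} A + k_{m+1} B = Q`. The hypothesis `|x - c/d| < 1/d²`
becomes `|v A - u B| d < Q`; since `0 < d < k_{m+2}`, `u` and `v` have opposite signs, which gives
`|v| d < k_{m+2}`. This leaves `u = 0`, where coprimality forces `v = 1` (a convergent), or `u = 1`,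
where `g = b_{m+1} + v` is `0` (a convergent), `1` or `b_{m+1} - 1` (a semiconvergent). The sign
of `v A - u B` decides on which side of `x` the fraction lies.
-/

/-- Value of the continued fraction `[b₀; b₁, …, b_k]`. -/
def cfVal : ℤ → List ℤ → ℚ
  | b0, [] => (b0 : ℚ)
  | b0, b :: bs => (b0 : ℚ) + (cfVal b bs)⁻¹

/-- Numerators of the convergents of `[b₀; b₁, …, b_k]` (given as a list `l`):
`cnum l (j+1) = h_j`, with the convention `cnum l 0 = h_{-1} = 1`. -/
def cnum (l : List ℤ) : ℕ → ℤ
  | 0 => 1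
  | 1 => l.getD 0 0
  | n + 2 => l.getD (n + 1) 0 * cnum l (n + 1) + cnum l n

/-- Denominators of the convergents: `cden l (j+1) = k_j`, with `cden l 0 = k_{-1} = 0`. -/
def cden (l : List ℤ) : ℕ → ℤ
  | 0 => 0
  | 1 => 1
  | n + 2 => l.getD (n + 1) 0 * cden l (n + 1) + cden l n

theorem cnum_add_two (l : List ℤ) (n : ℕ) :
    cnum l (n + 2) = l.getD (n + 1) 0 * cnum l (n + 1) + cnum l n := rfl

theorem cden_add_two (l : List ℤ) (n : ℕ) :
    cden l (n + 2) = l.getD (n + 1) 0 * cden l (n + 1) + cden l n := rfl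

theorem cnum_mul_cden_sub_cnum_mul_cden (l : List ℤ) (n : ℕ) :
    cnum l (n + 1) * cden l n - cnum l n * cden l (n + 1) = (-1) ^ (n + 1) := by
  induction n with
  | zero => simp [cnum, cden]
  | succ n ih =>
    rw [cnum_add_two, cden_add_two, pow_succ]
    linear_combination (-1 : ℤ) * ih

theorem neg_one_pow_mul_self (n : ℕ) : ((-1 : ℤ) ^ n) * (-1) ^ n = 1 := by
  rw [← mul_pow]; norm_num

theorem recurrence_nonneg_le_succ_pos {b s : ℕ → ℤ} {i N : ℕ} (hb : ∀ n < N, 1 ≤ b n)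
    (hrec : ∀ n, s (n + 2) = b n * s (n + 1) + s n) (h0 : s i = 0) (h1 : s (i + 1) = 1) :
    ∀ n, i ≤ n → n ≤ N → 0 ≤ s n ∧ s n ≤ s (n + 1) ∧ 0 < s (n + 1) := by
  intro n hin
  induction n, hin using Nat.le_induction with
  | base => simp [h0, h1]
  | succ n _ ih =>
    intro hn
    obtain ⟨hnonneg, hle, hpos⟩ := ih (by omega)
    have hmul := mul_le_mul_of_nonneg_right (hb n (by omega)) hpos.le
    rw [hrec]
    refine ⟨hpos.le, ?_, ?_⟩ <;> linarith

theorem cden_nonneg_le_succ_pos {l : List ℤ} {N : ℕ} (hl : ∀ n < N, 1 ≤ l.getD (n + 1) 0)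
    {n : ℕ} (hn : n ≤ N) : 0 ≤ cden l n ∧ cden l n ≤ cden l (n + 1) ∧ 0 < cden l (n + 1) :=
  recurrence_nonneg_le_succ_pos hl (cden_add_two l) rfl rfl n n.zero_le hn

theorem cden_cons_succ (b0 : ℤ) (l : List ℤ) : ∀ n, cden (b0 :: l) (n + 1) = cnum l n
  | 0 => rfl
  | 1 => by simp [cden, cnum]
  | n + 2 => by
    rw [cden_add_two, cden_cons_succ b0 l (n + 1), cden_cons_succ b0 l n, cnum_add_two,
      List.getD_cons_succ]

theorem cnum_cons_succ (b0 : ℤ) (l : List ℤ) :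
    ∀ n, cnum (b0 :: l) (n + 1) = b0 * cnum l n + cden l n
  | 0 => by simp [cnum, cden]
  | 1 => by simp [cnum, cden, mul_comm]
  | n + 2 => by
    rw [cnum_add_two, cnum_cons_succ b0 l (n + 1), cnum_cons_succ b0 l n, cnum_add_two,
      cden_add_two, List.getD_cons_succ]
    ring

theorem one_le_getD_succ {b0 : ℤ} {bs : List ℤ} (hpos : ∀ b ∈ bs, 1 ≤ b) :
    ∀ n < bs.length, 1 ≤ (b0 :: bs).getD (n + 1) 0 := fun n hn => by
  rw [List.getD_cons_succ, List.getD_eq_getElem _ _ hn]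
  exact hpos _ (List.getElem_mem hn)

theorem cfVal_eq_cnum_div_cden (b0 : ℤ) (bs : List ℤ) (hpos : ∀ b ∈ bs, 1 ≤ b) :
    cfVal b0 bs = cnum (b0 :: bs) (bs.length + 1) / cden (b0 :: bs) (bs.length + 1) := by
  induction bs generalizing b0 with
  | nil => simp [cfVal, cnum, cden]
  | cons b1 rest ih =>
    have hnum : cnum (b1 :: rest) (rest.length + 1) ≠ 0 := by
      rw [← cden_cons_succ b0]
      exact (cden_nonneg_le_succ_pos (one_le_getD_succ hpos) le_rfl).2.2.ne'
    rw [cfVal, ih b1 fun b hb => hpos b (List.mem_cons_of_mem b1 hb), List.length_cons,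
      cnum_cons_succ b0 (b1 :: rest), cden_cons_succ b0 (b1 :: rest), inv_div]
    push_cast
    field_simp

/-- For `x = cnum l n / cden l n`, `crossDet l i n = cden l n * |cden l i * x - cnum l i|` is the
scaled error of the `i`-th convergent. -/
def crossDet (l : List ℤ) (i n : ℕ) : ℤ :=
  (-1) ^ (i + 1) * (cnum l n * cden l i - cnum l i * cden l n)

theorem cden_succ_mul_crossDet_add (l : List ℤ) (i n : ℕ) :
    cden l (i + 1) * crossDet l i n + cden l i * crossDet l (i + 1) n = cden l n := by
  have hdet := cnum_mul_cden_sub_cnum_mul_cden l i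
  have hsq := neg_one_pow_mul_self (i + 1)
  simp only [crossDet]
  linear_combination (-1) ^ (i + 1) * cden l n * hdet + cden l n * hsq

theorem cnum_mul_sub_mul_cden (l : List ℤ) (i n : ℕ) (u v : ℤ) :
    cnum l n * (u * cden l (i + 1) + v * cden l i) - (u * cnum l (i + 1) + v * cnum l i) * cden l n
      = (-1) ^ (i + 1) * (v * crossDet l i n - u * crossDet l (i + 1) n) := by
  have hsq := neg_one_pow_mul_self (i + 1)
  simp only [crossDet]
  linear_combination (-(cnum l n * (u * cden l (i + 1) + v * cden l i) -
    (u * cnum l (i + 1) + v * cnum l i) * cden l n)) * hsq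

section Positivity

variable {l : List ℤ} {N : ℕ}

theorem crossDet_pos (hl : ∀ n < N, 1 ≤ l.getD (n + 1) 0) {i n : ℕ} (hin : i < n)
    (hn : n ≤ N + 1) : 0 < crossDet l i n := by
  obtain ⟨n, rfl⟩ : ∃ k, n = k + 1 := ⟨n - 1, by omega⟩
  refine (recurrence_nonneg_le_succ_pos (s := crossDet l i) (i := i) hl (fun k => ?_) ?_ ?_ n
    (by omega) (by omega)).2.2
  · simp only [crossDet, cnum_add_two, cden_add_two]; ring
  · simp only [crossDet]; ring
  · rw [crossDet, cnum_mul_cden_sub_cnum_mul_cden, neg_one_pow_mul_self]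

theorem crossDet_nonneg (hl : ∀ n < N, 1 ≤ l.getD (n + 1) 0) {i n : ℕ} (hin : i ≤ n)
    (hn : n ≤ N + 1) : 0 ≤ crossDet l i n := by
  rcases hin.lt_or_eq with hin | rfl
  · exact (crossDet_pos hl hin hn).le
  · simp [crossDet]

end Positivity

theorem exists_eq_mul_add_mul (l : List ℤ) (i : ℕ) (c d : ℤ) :
    ∃ u v : ℤ, c = u * cnum l (i + 1) + v * cnum l i ∧ d = u * cden l (i + 1) + v * cden l i := by
  have hdet := cnum_mul_cden_sub_cnum_mul_cden l i
  have hsq := neg_one_pow_mul_self (i + 1)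
  refine ⟨(-1) ^ (i + 1) * (c * cden l i - d * cnum l i),
    (-1) ^ (i + 1) * (d * cnum l (i + 1) - c * cden l (i + 1)), ?_, ?_⟩
  · linear_combination (-(-1) ^ (i + 1) * c) * hdet - c * hsq
  · linear_combination (-(-1) ^ (i + 1) * d) * hdet - d * hsq

theorem exists_le_lt_succ {f : ℕ → ℤ} {d : ℤ} (h0 : f 0 ≤ d) :
    ∀ {N : ℕ}, d < f N → ∃ m < N, f m ≤ d ∧ d < f (m + 1)
  | 0, hN => absurd h0 (not_le.2 hN)
  | N + 1, hN => by
    by_cases hd : d < f N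
    · obtain ⟨m, hm, hfm⟩ := exists_le_lt_succ h0 hd
      exact ⟨m, by omega, hfm⟩
    · exact ⟨N, by omega, not_lt.1 hd, hN⟩

theorem neg_one_pow_succ_mul_pos_iff {t : ℤ} (ht : 0 < t) (n : ℕ) :
    0 < (-1) ^ (n + 1) * t ↔ Odd n := by
  rcases n.even_or_odd with hn | hn
  · simp only [hn.add_one.neg_one_pow, neg_one_mul, Left.neg_pos_iff, Nat.not_odd_iff_even.2 hn,
      iff_false, not_lt, ht.le]
  · simp [hn.add_one.neg_one_pow, ht, hn]

theorem abs_mul_lt_of_abs_sub_mul_lt {A B q1 q2 d u v : ℤ} (hA : 0 < A) (hB : 0 ≤ B)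
    (hd : q1 ≤ d) (hd0 : 0 ≤ d) (hu : u ≠ 0) (huv : u * v ≤ 0)
    (h : |v * A - u * B| * d < q2 * A + q1 * B) : |v| * d < q2 := by
  have habs : |v * A - u * B| = |v| * A + |u| * B := by
    rcases hu.lt_or_gt with hu | hu
    · have hv : 0 ≤ v := by nlinarith
      rw [abs_of_nonneg hv, abs_of_neg hu, abs_of_nonneg (by nlinarith)]
      ring
    · have hv : v ≤ 0 := by nlinarith
      rw [abs_of_nonpos hv, abs_of_pos hu, abs_of_nonpos (by nlinarith)]
      ring
  have hBu : q1 * B ≤ |u| * B * d := by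
    have hu1 : 1 ≤ |u| := Int.one_le_abs hu
    nlinarith [mul_le_mul_of_nonneg_right hd hB, mul_nonneg (sub_nonneg.2 hu1) (mul_nonneg hB hd0)]
  rw [habs] at h
  exact lt_of_mul_lt_mul_right (a := A) (by nlinarith) hA.le

theorem eq_one_or_eq_one_of_mul_lt {g w q0 q1 : ℤ} (hq0 : 0 ≤ q0) (hq1 : 0 ≤ q1) (hg : 1 ≤ g)
    (hw : 1 ≤ w) (h : w * (g * q1 + q0) < (g + w) * q1 + q0) : g = 1 ∨ w = 1 := by
  by_contra! hne
  have hg2 : 2 ≤ g := lt_of_le_of_ne hg hne.1.symm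
  have hw2 : 2 ≤ w := lt_of_le_of_ne hw hne.2.symm
  nlinarith [mul_nonneg (mul_nonneg (sub_nonneg.2 hg2) (sub_nonneg.2 hw2)) hq1,
    mul_nonneg (sub_nonneg.2 hw) hq0]

/-- Read with `(c, d) = u (h₂, k₂) + v (h₁, k₁)` for consecutive convergents, `k₁ ≤ d < k₂`, and
`A`, `B` the scaled errors of `h₁/k₁`, `h₂/k₂`. -/
theorem coeff_cases_of_abs_sub_mul_lt {b q0 q1 q2 d u v A B : ℤ} (hq0 : 0 ≤ q0)
    (hq01 : q0 ≤ q1) (hq2 : q2 = b * q1 + q0) (hd0 : 0 < d) (hd1 : q1 ≤ d) (hd2 : d < q2)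
    (hduv : d = u * q2 + v * q1) (hA : 0 < A) (hB : 0 ≤ B)
    (happ : |v * A - u * B| * d < q2 * A + q1 * B) :
    u = 0 ∧ 0 < v ∨ u = 1 ∧ v < 0 ∧ (b + v = 0 ∨ b + v = 1 ∨ v = -1) := by
  have hq1 : 0 ≤ q1 := hq0.trans hq01
  rcases lt_trichotomy u 0 with hu | rfl | hu
  · have hv : 0 < v := by nlinarith
    have hvd := abs_mul_lt_of_abs_sub_mul_lt hA hB hd1 hd0.le hu.ne (by nlinarith) happ
    rw [abs_of_pos hv] at hvd
    -- `v d ≥ v q1 = d - u q2 > q2`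
    nlinarith
  · exact Or.inl ⟨rfl, by nlinarith⟩
  · have hv : v < 0 := by nlinarith
    have hvd := abs_mul_lt_of_abs_sub_mul_lt hA hB hd1 hd0.le hu.ne' (by nlinarith) happ
    rw [abs_of_neg hv] at hvd
    -- otherwise `d ≥ 2 q2 + v q1 ≥ 2 q2 + v d > q2`
    obtain rfl : u = 1 := by nlinarith
    refine Or.inr ⟨rfl, hv, ?_⟩
    rcases le_or_gt (b + v) 0 with hg | hg
    · exact Or.inl (by nlinarith)
    · subst hq2
      refine Or.inr ((eq_one_or_eq_one_of_mul_lt (w := -v) hq0 hq1 hg (by omega) ?_).imp id ?_)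
      · nlinarith
      · omega

theorem convergent_or_semiconvergent_of_abs_mul_lt {l : List ℤ} {N : ℕ}
    (hl : ∀ n < N, 1 ≤ l.getD (n + 1) 0) {c d : ℤ} (hd : 0 < d) (hcd : Int.gcd c d = 1)
    (he : cnum l (N + 1) * d - c * cden l (N + 1) ≠ 0)
    (happ : |cnum l (N + 1) * d - c * cden l (N + 1)| * d < cden l (N + 1)) :
    (∃ i ≤ N, c = cnum l i ∧ d = cden l i ∧
        (0 < cnum l (N + 1) * d - c * cden l (N + 1) ↔ Odd i)) ∨
      (∃ i ≤ N - 1, ∃ g : ℤ, (g = 1 ∨ g = l.getD (i + 1) 0 - 1) ∧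
        c = cnum l i + g * cnum l (i + 1) ∧ d = cden l i + g * cden l (i + 1) ∧
        (0 < cnum l (N + 1) * d - c * cden l (N + 1) ↔ Odd i)) := by
  have hdQ : d < cden l (N + 1) :=
    (le_mul_of_one_le_left hd.le (Int.one_le_abs he)).trans_lt happ
  obtain ⟨m, hmN, hdm, hdm'⟩ :=
    exists_le_lt_succ (f := fun k => cden l (k + 1)) (show cden l 1 ≤ d from hd) hdQ
  obtain ⟨hq0, hq01, -⟩ := cden_nonneg_le_succ_pos hl hmN.le
  have hA : 0 < crossDet l (m + 1) (N + 1) := crossDet_pos hl (by omega) (by omega)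
  have hB : 0 ≤ crossDet l (m + 2) (N + 1) := crossDet_nonneg hl (by omega) (by omega)
  obtain ⟨u, v, rfl, rfl⟩ := exists_eq_mul_add_mul l (m + 1) c d
  rw [cnum_mul_sub_mul_cden] at he happ ⊢
  rw [← cden_succ_mul_crossDet_add l (m + 1) (N + 1), abs_mul, abs_neg_one_pow, one_mul] at happ
  rcases coeff_cases_of_abs_sub_mul_lt hq0 hq01 (cden_add_two l m) hd hdm hdm' rfl hA hB happ with
    ⟨rfl, hv⟩ | ⟨rfl, hv, hg⟩
  · obtain rfl : v = 1 := Int.eq_one_of_dvd_one hv.le <| by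
      rw [← Int.natCast_one, ← hcd]
      exact Int.dvd_coe_gcd ⟨cnum l (m + 1), by ring⟩ ⟨cden l (m + 1), by ring⟩
    refine Or.inl ⟨m + 1, hmN, by ring, by ring, ?_⟩
    convert neg_one_pow_succ_mul_pos_iff hA (m + 1) using 3
    ring
  have hsign : 0 < (-1) ^ (m + 1 + 1) * (v * crossDet l (m + 1) (N + 1) -
      1 * crossDet l (m + 1 + 1) (N + 1)) ↔ Odd m := by
    convert neg_one_pow_succ_mul_pos_iff (t := crossDet l (m + 2) (N + 1) -
      v * crossDet l (m + 1) (N + 1)) (by nlinarith) m using 2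
    ring
  rw [cnum_add_two, cden_add_two]
  rcases hg with hg | hg | rfl
  · exact Or.inl ⟨m, by omega, by linear_combination cnum l (m + 1) * hg,
      by linear_combination cden l (m + 1) * hg, hsign⟩
  · exact Or.inr ⟨m, by omega, 1, Or.inl rfl, by linear_combination cnum l (m + 1) * hg,
      by linear_combination cden l (m + 1) * hg, hsign⟩
  · exact Or.inr ⟨m, by omega, l.getD (m + 1) 0 - 1, Or.inr rfl, by ring, by ring, hsign⟩

theorem abs_mul_lt_of_abs_div_sub_div_lt {P Q c d : ℤ} (hQ : 0 < Q) (hd : 0 < d)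
    (h : |(P : ℚ) / Q - c / d| < 1 / (d : ℚ) ^ 2) : |P * d - c * Q| * d < Q := by
  have hQ' : (0 : ℚ) < Q := by exact_mod_cast hQ
  have hd' : (0 : ℚ) < d := by exact_mod_cast hd
  have hdiff : (P : ℚ) / Q - c / d = ((P * d - c * Q : ℤ) : ℚ) / (Q * d) := by
    push_cast
    field_simp
  rw [hdiff, abs_div, abs_of_pos (mul_pos hQ' hd'),
    div_lt_div_iff₀ (mul_pos hQ' hd') (by positivity), one_mul] at h
  have h' : ((|P * d - c * Q| * d : ℤ) : ℚ) * d < Q * d := by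
    rw [Int.cast_mul, Int.cast_abs, mul_assoc, ← sq]
    exact h
  exact_mod_cast lt_of_mul_lt_mul_right h' hd'.le

/-- Every good rational approximation of `x = [b₀; b₁, …, b_k]` is a convergent or one of two
special semiconvergents; indices are shifted by one, so `i = j + 1` with `-1 ≤ j`. -/
theorem stmt_6 (b0 : ℤ) (bs : List ℤ) (hpos : ∀ b ∈ bs, 1 ≤ b)
    (x : ℚ) (hx : x = cfVal b0 bs)
    (c d : ℤ) (hd : 0 < d) (hcd : Int.gcd c d = 1)
    (h0 : (c : ℚ) / d ≠ x) (happ : |x - (c : ℚ) / d| < 1 / (d : ℚ) ^ 2) :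
    (∃ i ≤ bs.length, (c : ℚ) / d = (cnum (b0 :: bs) i : ℚ) / (cden (b0 :: bs) i : ℚ) ∧
        ((c : ℚ) / d < x ↔ Odd i)) ∨
      (∃ i ≤ bs.length - 1, ∃ g : ℤ,
        (g = 1 ∨ g = (b0 :: bs).getD (i + 1) 0 - 1) ∧
        (c : ℚ) / d = ((cnum (b0 :: bs) i + g * cnum (b0 :: bs) (i + 1) : ℤ) : ℚ) /
          ((cden (b0 :: bs) i + g * cden (b0 :: bs) (i + 1) : ℤ) : ℚ) ∧
        ((c : ℚ) / d < x ↔ Odd i)) := by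
  have hl := one_le_getD_succ (b0 := b0) hpos
  have hQ := (cden_nonneg_le_succ_pos hl le_rfl).2.2
  rw [cfVal_eq_cnum_div_cden b0 bs hpos] at hx
  subst hx
  set P := cnum (b0 :: bs) (bs.length + 1)
  set Q := cden (b0 :: bs) (bs.length + 1)
  have hd' : (0 : ℚ) < d := by exact_mod_cast hd
  have hQ' : (0 : ℚ) < Q := by exact_mod_cast hQ
  have hlt : (c : ℚ) / d < P / Q ↔ 0 < P * d - c * Q := by
    rw [div_lt_div_iff₀ hd' hQ', sub_pos]
    norm_cast
  have he : P * d - c * Q ≠ 0 := fun he => h0 <| by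
    rw [div_eq_div_iff hd'.ne' hQ'.ne']
    exact_mod_cast (sub_eq_zero.1 he).symm
  rcases convergent_or_semiconvergent_of_abs_mul_lt hl hd hcd he
      (abs_mul_lt_of_abs_div_sub_div_lt hQ hd happ) with
    ⟨i, hi, rfl, rfl, hodd⟩ | ⟨i, hi, g, hg, rfl, rfl, hodd⟩
  · exact Or.inl ⟨i, hi, rfl, hlt.trans hodd⟩
  · exact Or.inr ⟨i, hi, g, hg, rfl, hlt.trans hodd⟩
end

section
/- If q is prime, then Σ_{a=1}^{q−1} S(a/q) = Σ_{m·n < q, m,n ≥ 1, q ∤ m, q ∤ n} 1 = Σ_{N=1}^{q−1} d(N), where d(N) is the number of divisors of N. -/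
theorem stmt_18 (q : ℕ) (hq : q.Prime) :
    ∑ a ∈ Finset.Ico 1 q, S (a : ℤ) (q : ℤ) =
      ∑ N ∈ Finset.Ico 1 q, (Nat.divisors N).card := by
  haveI : Fact q.Prime := ⟨hq⟩
  haveI : NeZero q := ⟨hq.pos.ne'⟩
  have hq0 : 0 < q := hq.pos
  have hL : ∑ a ∈ Finset.Ico 1 q, S (a : ℤ) (q : ℤ)
      = ((Finset.Ico 1 q).sigma (fun a => ((Finset.Ioo 0 (q:ℤ) ×ˢ Finset.Ioo 0 (q:ℤ)).filter
        (fun p => (a:ℤ) * p.1 % (q:ℤ) = p.2 % (q:ℤ) ∧ p.1 * p.2 < (q:ℤ))))).card := by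
    rw [Finset.card_sigma]; rfl
  have hR : ∑ N ∈ Finset.Ico 1 q, (Nat.divisors N).card
      = ((Finset.Ico 1 q).sigma (fun N => N.divisors)).card := (Finset.card_sigma _ _).symm
  rw [hL, hR]
  apply Finset.card_bij (fun x _ => (⟨(x.2.1 * x.2.2).toNat, x.2.1.toNat⟩ : Σ _ : ℕ, ℕ))
  · -- maps into t
    rintro ⟨a, m, n⟩ hx
    simp only [Finset.mem_sigma, Finset.mem_filter, Finset.mem_product, Finset.mem_Ioo,
      Finset.mem_Ico] at hx
    obtain ⟨⟨ha1, ha2⟩, ⟨⟨⟨hm0, hmq⟩, hn0, hnq⟩, hmod, hlt⟩⟩ := hx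
    simp only [Finset.mem_sigma, Finset.mem_Ico, Nat.mem_divisors]
    have hmn0 : 0 < m * n := mul_pos hm0 hn0
    refine ⟨⟨?_, ?_⟩, ?_, ?_⟩
    · omega
    · omega
    · refine ⟨n.toNat, ?_⟩
      have e1 : ((m.toNat : ℤ)) = m := Int.toNat_of_nonneg hm0.le
      have e2 : ((n.toNat : ℤ)) = n := Int.toNat_of_nonneg hn0.le
      have e3 : m * n = ((m.toNat * n.toNat : ℕ) : ℤ) := by push_cast [e1, e2]; ring
      rw [e3, Int.toNat_natCast]
    · omega
  · -- injective
    rintro ⟨a, m, n⟩ hx ⟨b, u, v⟩ hy heq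
    simp only [Finset.mem_sigma, Finset.mem_filter, Finset.mem_product, Finset.mem_Ioo,
      Finset.mem_Ico] at hx hy
    obtain ⟨⟨ha1, ha2⟩, ⟨⟨⟨hm0, hmq⟩, hn0, hnq⟩, hmod, hlt⟩⟩ := hx
    obtain ⟨⟨hb1, hb2⟩, ⟨⟨⟨hu0, huq⟩, hv0, hvq⟩, hmod', hlt'⟩⟩ := hy
    have h1 : (m * n).toNat = (u * v).toNat := congrArg (fun s => s.1) heq
    have h2 : m.toNat = u.toNat := congrArg (fun s => s.2) heq
    have hmu : m = u := by omega
    have hmnuv : m * n = u * v := by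
      have h3 : 0 ≤ m * n := le_of_lt (mul_pos hm0 hn0)
      have h4 : 0 ≤ u * v := le_of_lt (mul_pos hu0 hv0)
      omega
    have hnv : n = v := by
      subst hmu
      exact mul_left_cancel₀ hm0.ne' (hmnuv)
    subst hmu; subst hnv
    -- now a = b
    have hma : ((m : ZMod q)) ≠ 0 := by
      rw [Ne, ZMod.intCast_zmod_eq_zero_iff_dvd]
      intro hdvd
      have := Int.le_of_dvd hm0 hdvd
      omega
    have hab : ((a : ZMod q)) = ((b : ZMod q)) := by
      have e1 : (((a : ℤ) * m : ℤ) : ZMod q) = ((n : ℤ) : ZMod q) :=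
        (ZMod.intCast_eq_intCast_iff' _ _ _).mpr hmod
      have e2 : (((b : ℤ) * m : ℤ) : ZMod q) = ((n : ℤ) : ZMod q) :=
        (ZMod.intCast_eq_intCast_iff' _ _ _).mpr hmod'
      push_cast at e1 e2
      exact mul_right_cancel₀ hma (e1.trans e2.symm)
    have hva : ((a : ZMod q)).val = a := ZMod.val_cast_of_lt ha2
    have hvb : ((b : ZMod q)).val = b := ZMod.val_cast_of_lt hb2
    have : a = b := by rw [← hva, ← hvb, hab]
    subst this
    rfl
  · -- surjective
    rintro ⟨N, d⟩ hy
    simp only [Finset.mem_sigma, Finset.mem_Ico, Nat.mem_divisors] at hy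
    obtain ⟨⟨hN1, hNq⟩, ⟨n, hdn⟩, hN0⟩ := hy
    have hd0 : 0 < d := by
      rcases Nat.eq_zero_or_pos d with h | h
      · subst h; simp at hdn; omega
      · exact h
    have hn0 : 0 < n := by
      rcases Nat.eq_zero_or_pos n with h | h
      · subst h; simp at hdn; omega
      · exact h
    have hdq : d < q := lt_of_le_of_lt (Nat.le_of_dvd (by omega) ⟨n, hdn⟩) hNq
    have hnq : n < q := lt_of_le_of_lt (Nat.le_of_dvd (by omega) ⟨d, by rw [hdn, mul_comm]⟩) hNq
    have hdz : ((d : ZMod q)) ≠ 0 := by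
      rw [Ne, ZMod.natCast_eq_zero_iff]
      intro h; have := Nat.le_of_dvd hd0 h; omega
    have hnz : ((n : ZMod q)) ≠ 0 := by
      rw [Ne, ZMod.natCast_eq_zero_iff]
      intro h; have := Nat.le_of_dvd hn0 h; omega
    set u : ZMod q := (n : ZMod q) * (d : ZMod q)⁻¹ with hu
    have huz : u ≠ 0 := mul_ne_zero hnz (inv_ne_zero hdz)
    refine ⟨⟨u.val, ((d : ℤ), (n : ℤ))⟩, ?_, ?_⟩
    · simp only [Finset.mem_sigma, Finset.mem_filter, Finset.mem_product, Finset.mem_Ioo,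
        Finset.mem_Ico]
      have hval : (u.val : ZMod q) = u := ZMod.natCast_rightInverse u
      refine ⟨⟨?_, ZMod.val_lt u⟩, ⟨⟨?_, ?_⟩, ?_, ?_⟩, ?_, ?_⟩
      · have : u.val ≠ 0 := by
          intro h; apply huz; rwa [ZMod.val_eq_zero] at h
        omega
      · exact_mod_cast hd0
      · exact_mod_cast hdq
      · exact_mod_cast hn0
      · exact_mod_cast hnq
      · -- congruence
        rw [← ZMod.intCast_eq_intCast_iff']
        push_cast
        rw [hval, hu, mul_assoc, inv_mul_cancel₀ hdz, mul_one]
      · -- product small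
        have : (d : ℤ) * (n : ℤ) = (N : ℤ) := by exact_mod_cast hdn.symm
        rw [this]; exact_mod_cast hNq
    · have e1 : ((d : ℤ) * (n : ℤ)).toNat = N := by
        have e3 : ((d : ℤ) * (n : ℤ)) = ((d * n : ℕ) : ℤ) := by push_cast; ring
        rw [e3, Int.toNat_natCast]; omega
      have e2 : ((d : ℤ)).toNat = d := Int.toNat_natCast d
      simp only [e1, e2]
end
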